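/- arXiv:2212.05520 — 2 statements merged into one kernel-verified Lean document; each statement's English description precedes it below -/
import Mathlib

section
/- Suppose 𝒜 is an a.d.-family such that ℙ_𝒜 is σ-centered, Y is a Banach space, and T : X_𝒜 → Y is a bounded linear injective operator with separable range. Then the unit sphere of (X_𝒜, ‖·‖_T) is the union of countably many sets, each of diameter strictly less than 1. -/
open Set Filter Cardinal

noncomputable section

/-- The Banach space `ℓ∞` of bounded real sequences with the sup norm. -/
abbrev Linfty : Type := lp (fun _ : ℕ => ℝ) ⊤

/-- An a.d.-family: an uncountable family of infinite subsets of `ℕ` which is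
pairwise almost disjoint. -/
def ADFamily (𝒜 : Set (Set ℕ)) : Prop :=
  ¬𝒜.Countable ∧ (∀ A ∈ 𝒜, A.Infinite) ∧
    ∀ A ∈ 𝒜, ∀ B ∈ 𝒜, A ≠ B → (A ∩ B).Finite

/-- A maximal a.d.-family. -/
def MaximalADFamily (𝒜 : Set (Set ℕ)) : Prop :=
  ADFamily 𝒜 ∧ ∀ X : Set ℕ, X.Infinite → ∃ A ∈ 𝒜, (X ∩ A).Infinite

/-- `A =* B` : the symmetric difference is finite. -/
def eqStar (A B : Set ℕ) : Prop := (symmDiff A B).Finite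

/-- Finite subfamilies `a`, `b` of `𝒜` represent the pair `p`. -/
def Represents (𝒜 : Set (Set ℕ)) (p : Set ℕ × Set ℕ) (a b : Finset (Set ℕ)) : Prop :=
  ↑a ⊆ 𝒜 ∧ ↑b ⊆ 𝒜 ∧ eqStar p.1 (⋃ A ∈ a, A) ∧ eqStar p.2 (⋃ B ∈ b, B)

/-- `p` is a condition of the splitting partial order `ℙ_𝒜`. -/
def SplitCond (𝒜 : Set (Set ℕ)) (p : Set ℕ × Set ℕ) : Prop :=
  p.1 ∩ p.2 = ∅ ∧ ∃ a b : Finset (Set ℕ), Represents 𝒜 p a b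

/-- `Extends p q` means `p ≤ q` in `ℙ_𝒜`. -/
def Extends (p q : Set ℕ × Set ℕ) : Prop := q.1 ⊆ p.1 ∧ q.2 ⊆ p.2

/-- Compatibility in `ℙ_𝒜`. -/
def Compat (𝒜 : Set (Set ℕ)) (p q : Set ℕ × Set ℕ) : Prop :=
  ∃ r, SplitCond 𝒜 r ∧ Extends r p ∧ Extends r q

/-- An antichain of `ℙ_𝒜`: a set of pairwise incompatible conditions. -/
def SplitAntichain (𝒜 : Set (Set ℕ)) (P : Set (Set ℕ × Set ℕ)) : Prop :=
  (∀ p ∈ P, SplitCond 𝒜 p) ∧ ∀ p ∈ P, ∀ q ∈ P, p ≠ q → ¬Compat 𝒜 p q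

/-- `ℙ_𝒜` satisfies the countable chain condition. -/
def SplitCCC (𝒜 : Set (Set ℕ)) : Prop :=
  ∀ P : Set (Set ℕ × Set ℕ), SplitAntichain 𝒜 P → P.Countable

/-- A centered subset of `ℙ_𝒜`: every finite subset has a common lower bound in `ℙ_𝒜`. -/
def SplitCentered (𝒜 : Set (Set ℕ)) (P : Set (Set ℕ × Set ℕ)) : Prop :=
  ∀ F : Finset (Set ℕ × Set ℕ), ↑F ⊆ P →
    ∃ r, SplitCond 𝒜 r ∧ ∀ p ∈ F, Extends r p

/-- `ℙ_𝒜` is σ-centered. -/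
def SplitSigmaCentered (𝒜 : Set (Set ℕ)) : Prop :=
  ∃ P : ℕ → Set (Set ℕ × Set ℕ),
    (⋃ n, P n) = {p | SplitCond 𝒜 p} ∧ ∀ n, SplitCentered 𝒜 (P n)

/-- `ℙ_𝒜` has precaliber `κ`. -/
def SplitPrecaliber (𝒜 : Set (Set ℕ)) (κ : Cardinal) : Prop :=
  ∀ P : Set (Set ℕ × Set ℕ), (∀ p ∈ P, SplitCond 𝒜 p) → #P = κ →
    ∃ Q ⊆ P, #Q = κ ∧ SplitCentered 𝒜 Q

/-- Two conditions are essentially distinct if their (uniquely determined)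
representing finite subfamilies differ on both coordinates. -/
def EssDistinct (𝒜 : Set (Set ℕ)) (p q : Set ℕ × Set ℕ) : Prop :=
  ∀ ap bp aq bq : Finset (Set ℕ), Represents 𝒜 p ap bp → Represents 𝒜 q aq bq →
    ap ≠ aq ∧ bp ≠ bq

/-- An antiramsey a.d.-family. -/
def Antiramsey (𝒜 : Set (Set ℕ)) : Prop :=
  ADFamily 𝒜 ∧
  ∀ P : Set (Set ℕ × Set ℕ), (∀ p ∈ P, SplitCond 𝒜 p) → ¬P.Countable →
    (∀ p ∈ P, ∀ q ∈ P, p ≠ q → EssDistinct 𝒜 p q) →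
    (∃ p ∈ P, ∃ q ∈ P, p ≠ q ∧ Compat 𝒜 p q) ∧ (∃ p ∈ P, ∃ q ∈ P, ¬Compat 𝒜 p q)

/-- The first uncountable ordinal. -/
def omega1 : Ordinal.{0} := (Cardinal.aleph 1).ord

/-- A Luzin family. -/
def IsLuzinFamily (𝒜 : Set (Set ℕ)) : Prop :=
  ADFamily 𝒜 ∧ ∃ A : Ordinal.{0} → Set ℕ,
    (∀ ξ < omega1, A ξ ∈ 𝒜) ∧
    (∀ B ∈ 𝒜, ∃ ξ < omega1, A ξ = B) ∧
    (∀ ξ < omega1, ∀ η < omega1, ξ ≠ η → A ξ ≠ A η) ∧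
    ∀ η < omega1, ∀ m : ℕ, {ξ : Ordinal | ξ < η ∧ sSup (A ξ ∩ A η) = m}.Finite

/-- `(B i : i < n)` forms an `n`-Luzin gap. -/
def IsNLuzinGap (n : ℕ) (B : Fin n → Ordinal.{0} → Set ℕ) : Prop :=
  (∀ i : Fin n, ∀ α < omega1, ∀ β < omega1, α ≠ β → B i α ≠ B i β) ∧
  (∀ i j : Fin n, i ≠ j → ∀ α < omega1, ∀ β < omega1, B i α ≠ B j β) ∧
  ∃ m : ℕ,
    (∀ i j : Fin n, i < j → ∀ α < omega1, B i α ∩ B j α ⊆ Set.Iio m) ∧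
    (∀ α < omega1, ∀ β < omega1, α ≠ β →
      ¬(⋃ (i : Fin n) (j : Fin n) (_ : i ≠ j), B i α ∩ B j β) ⊆ Set.Iio m)

/-- `𝒜` contains an `n`-Luzin gap. -/
def ContainsNLuzinGap (𝒜 : Set (Set ℕ)) (n : ℕ) : Prop :=
  ∃ B : Fin n → Ordinal.{0} → Set ℕ,
    (∀ i : Fin n, ∀ α < omega1, B i α ∈ 𝒜) ∧ IsNLuzinGap n B

-- The characteristic function of `A ⊆ ℕ` as an element of `ℓ∞`.
open Classical in
def indicatorLinfty (A : Set ℕ) : Linfty :=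
  ⟨fun n => if n ∈ A then (1 : ℝ) else 0, by
    apply memℓp_infty
    refine ⟨1, ?_⟩
    rintro x ⟨n, rfl⟩
    dsimp only
    split <;> simp⟩

/-- The subset `c₀` of `ℓ∞`. -/
def c0Set : Set Linfty := {f | Tendsto (fun n => f n) atTop (nhds 0)}

/-- The Johnson–Lindenstrauss space `X_𝒜`: the closed linear span of
`c₀ ∪ {1_A : A ∈ 𝒜}` in `ℓ∞`, as a (closed) submodule. -/
def XA (𝒜 : Set (Set ℕ)) : Submodule ℝ Linfty :=
  (Submodule.span ℝ (c0Set ∪ indicatorLinfty '' 𝒜)).topologicalClosure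

/-- The norm `‖·‖_{∞,2}` on `ℓ∞`. -/
def norm12 (f : Linfty) : ℝ :=
  ‖f‖ + Real.sqrt (∑' n : ℕ, (f n) ^ 2 / 2 ^ (n + 1))

/-- The unit sphere of `(X_𝒜, ‖·‖∞)`. -/
def sphereInf (𝒜 : Set (Set ℕ)) : Set Linfty :=
  {f : Linfty | f ∈ XA 𝒜 ∧ ‖f‖ = 1}

/-- The unit sphere of `(X_𝒜, ‖·‖_{∞,2})`. -/
def sphere12 (𝒜 : Set (Set ℕ)) : Set Linfty :=
  {f : Linfty | f ∈ XA 𝒜 ∧ norm12 f = 1}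

/-- The Open Coloring Axiom. -/
def OCA : Prop :=
  ∀ (X : Type) [MetricSpace X], TopologicalSpace.SeparableSpace X →
    ∀ K : Set (X × X), IsOpen K → (∀ x y : X, (x, y) ∈ K → (y, x) ∈ K) →
      (∃ Y : Set X, ¬Y.Countable ∧ ∀ x ∈ Y, ∀ y ∈ Y, x ≠ y → (x, y) ∈ K) ∨
      (∃ C : ℕ → Set X, (⋃ n, C n) = Set.univ ∧
        ∀ n, ∀ x ∈ C n, ∀ y ∈ C n, x ≠ y → (x, y) ∉ K)

/-- An `ℝ`-embeddable a.d.-family. -/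
def REmbeddable (𝒜 : Set (Set ℕ)) : Prop :=
  ∃ (f : ℕ → ℚ) (r : Set ℕ → ℝ), Function.Injective f ∧
    (∀ A ∈ 𝒜, Irrational (r A) ∧
      ∀ ε : ℝ, 0 < ε → {n ∈ A | ε ≤ |(f n : ℝ) - r A|}.Finite) ∧
    (∀ A ∈ 𝒜, ∀ B ∈ 𝒜, A ≠ B → r A ≠ r B)

/-- The Continuum Hypothesis. -/
def CH : Prop := (Cardinal.continuum : Cardinal.{0}) = Cardinal.aleph 1

end


section Aux17

open Filter

lemma indicatorLinfty_apply_of_mem {A : Set ℕ} {n : ℕ} (h : n ∈ A) :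
    indicatorLinfty A n = 1 := by
  classical
  show (if n ∈ A then (1:ℝ) else 0) = 1
  rw [if_pos h]

lemma indicatorLinfty_apply_of_notMem {A : Set ℕ} {n : ℕ} (h : n ∉ A) :
    indicatorLinfty A n = 0 := by
  classical
  show (if n ∈ A then (1:ℝ) else 0) = 0
  rw [if_neg h]

lemma c0_mem_zero : (0 : Linfty) ∈ c0Set := by
  show Filter.Tendsto _ _ _
  have h : (fun n : ℕ => (0 : Linfty) n) = fun _ : ℕ => (0:ℝ) := by
    funext n; rw [lp.coeFn_zero]; rfl
  rw [h]; exact tendsto_const_nhds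

lemma c0_mem_add {f g : Linfty} (hf : f ∈ c0Set) (hg : g ∈ c0Set) : f + g ∈ c0Set := by
  have hf' : Filter.Tendsto (fun n => f n) Filter.atTop (nhds 0) := hf
  have hg' : Filter.Tendsto (fun n => g n) Filter.atTop (nhds 0) := hg
  show Filter.Tendsto _ _ _
  have h : (fun n : ℕ => (f + g) n) = fun n : ℕ => f n + g n := by
    funext n; rw [lp.coeFn_add]; rfl
  rw [h]; simpa using hf'.add hg'

lemma c0_mem_smul (c : ℝ) {f : Linfty} (hf : f ∈ c0Set) : c • f ∈ c0Set := by
  have hf' : Filter.Tendsto (fun n => f n) Filter.atTop (nhds 0) := hf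
  show Filter.Tendsto _ _ _
  have h : (fun n : ℕ => (c • f) n) = fun n : ℕ => c * f n := by
    funext n; rw [lp.coeFn_smul]; rfl
  rw [h]; simpa using hf'.const_mul c

lemma spanStructure {𝒜 : Set (Set ℕ)} {z : Linfty}
    (hz : z ∈ Submodule.span ℝ (c0Set ∪ indicatorLinfty '' 𝒜)) :
    ∃ (g : Linfty) (a : Finset (Set ℕ)) (lam : Set ℕ → ℝ), g ∈ c0Set ∧ ↑a ⊆ 𝒜 ∧
      z = g + ∑ A ∈ a, lam A • indicatorLinfty A := by
  induction hz using Submodule.span_induction with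
  | mem v hv =>
    rcases hv with hv | ⟨A, hA, rfl⟩
    · exact ⟨v, ∅, fun _ => 0, hv, by simp, by simp⟩
    · refine ⟨0, {A}, fun _ => 1, c0_mem_zero, ?_, by simp⟩
      simpa using hA
  | zero => exact ⟨0, ∅, fun _ => 0, c0_mem_zero, by simp, by simp⟩
  | add v w hv hw ihv ihw =>
    obtain ⟨g1, a1, l1, hg1, ha1, rfl⟩ := ihv
    obtain ⟨g2, a2, l2, hg2, ha2, rfl⟩ := ihw
    classical
    refine ⟨g1 + g2, a1 ∪ a2,
      fun A => (↑a1 : Set (Set ℕ)).indicator l1 A + (↑a2 : Set (Set ℕ)).indicator l2 A,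
      c0_mem_add hg1 hg2, ?_, ?_⟩
    · rw [Finset.coe_union]; exact Set.union_subset ha1 ha2
    · have h1 : ∑ A ∈ a1 ∪ a2, (↑a1 : Set (Set ℕ)).indicator l1 A • indicatorLinfty A
          = ∑ A ∈ a1, l1 A • indicatorLinfty A := by
        rw [← Finset.sum_subset Finset.subset_union_left (fun A _ hA => by
          rw [Set.indicator_of_notMem (by simpa using hA), zero_smul])]
        exact Finset.sum_congr rfl fun A hA => by
          rw [Set.indicator_of_mem (by simpa using hA)]
      have h2 : ∑ A ∈ a1 ∪ a2, (↑a2 : Set (Set ℕ)).indicator l2 A • indicatorLinfty A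
          = ∑ A ∈ a2, l2 A • indicatorLinfty A := by
        rw [← Finset.sum_subset Finset.subset_union_right (fun A _ hA => by
          rw [Set.indicator_of_notMem (by simpa using hA), zero_smul])]
        exact Finset.sum_congr rfl fun A hA => by
          rw [Set.indicator_of_mem (by simpa using hA)]
      have h3 : ∑ A ∈ a1 ∪ a2,
          ((↑a1 : Set (Set ℕ)).indicator l1 A + (↑a2 : Set (Set ℕ)).indicator l2 A)
            • indicatorLinfty A
          = (∑ A ∈ a1, l1 A • indicatorLinfty A) + ∑ A ∈ a2, l2 A • indicatorLinfty A := by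
        simp only [add_smul, Finset.sum_add_distrib]
        rw [h1, h2]
      rw [h3]; abel
  | smul c v hv ihv =>
    obtain ⟨g, a, l, hg, ha, rfl⟩ := ihv
    refine ⟨c • g, a, fun A => c * l A, c0_mem_smul c hg, ha, ?_⟩
    rw [smul_add, Finset.smul_sum]
    congr 1
    refine Finset.sum_congr rfl fun A _ => ?_
    dsimp only
    rw [smul_smul]

lemma round_close {a b s : ℝ} (hs : 0 < s) (h : round (a / s) = round (b / s)) :
    |a - b| ≤ s := by
  have h1 := abs_sub_round (a / s)
  have h2 := abs_sub_round (b / s)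
  have h3 : |a / s - b / s| ≤ 1 := by
    have he : a / s - b / s
        = (a / s - (round (a / s) : ℝ)) - (b / s - (round (b / s) : ℝ)) := by
      rw [h]; ring
    rw [he]
    calc |(a / s - (round (a / s) : ℝ)) - (b / s - (round (b / s) : ℝ))|
        ≤ |a / s - (round (a / s) : ℝ)| + |b / s - (round (b / s) : ℝ)| := abs_sub _ _
      _ ≤ 1 := by linarith
  have h4 : a - b = s * (a / s - b / s) := by field_simp
  rw [h4, abs_mul, abs_of_pos hs]
  have := mul_le_mul_of_nonneg_left h3 hs.le
  linarith

lemma abs_sub_le_max_abs_add {a b s : ℝ} (hs : 0 ≤ s)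
    (h1 : ¬(s < a ∧ b < -s)) (h2 : ¬(a < -s ∧ s < b)) :
    |a - b| ≤ max |a| |b| + s := by
  push_neg at h1 h2
  rw [abs_sub_le_iff]
  constructor
  · rcases le_or_gt (-s) b with hb | hb
    · have h3 := le_abs_self a
      have h4 := le_max_left |a| |b|
      linarith
    · have ha : a ≤ s := by
        by_contra hc
        push_neg at hc
        linarith [h1 hc]
      have h3 := neg_abs_le b
      have h4 := le_max_right |a| |b|
      linarith
  · rcases le_or_gt (-s) a with ha | ha
    · have h3 := le_abs_self b
      have h4 := le_max_right |a| |b|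
      linarith
    · have hb : b ≤ s := h2 ha
      have h3 := neg_abs_le a
      have h4 := le_max_left |a| |b|
      linarith

lemma keyStructure (𝒜 : Set (Set ℕ)) (h𝒜 : ADFamily 𝒜) (x : Linfty) (hx : x ∈ XA 𝒜)
    {s : ℝ} (hs : 0 < s) :
    ∃ p : Set ℕ × Set ℕ, SplitCond 𝒜 p ∧ ∃ E : Finset ℕ,
      {n : ℕ | s < x n} ⊆ p.1 ∪ ↑E ∧ {n : ℕ | x n < -s} ⊆ p.2 ∪ ↑E := by
  classical
  have hx' : x ∈ closure ((Submodule.span ℝ (c0Set ∪ indicatorLinfty '' 𝒜) :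
      Submodule ℝ Linfty) : Set Linfty) := by
    rw [← Submodule.topologicalClosure_coe]; exact hx
  obtain ⟨z, hzmem, hzdist⟩ := Metric.mem_closure_iff.mp hx' (s/4) (by positivity)
  have hxz : ‖x - z‖ < s / 4 := by rwa [← dist_eq_norm]
  obtain ⟨g, a, lam, hg, ha, hzeq⟩ := spanStructure hzmem
  have hg' : Filter.Tendsto (fun n => g n) Filter.atTop (nhds 0) := hg
  obtain ⟨N, hN⟩ := Metric.tendsto_atTop.mp hg' (s/4) (by positivity)
  set Hset := ⋃ A ∈ (a : Set (Set ℕ)), ⋃ B ∈ ((a.erase A : Finset (Set ℕ)) : Set (Set ℕ)),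
      A ∩ B with hH_def
  have hHfin : Hset.Finite := by
    apply Set.Finite.biUnion a.finite_toSet
    intro A hA
    apply Set.Finite.biUnion (a.erase A).finite_toSet
    intro B hB
    exact h𝒜.2.2 A (ha hA) B (ha (Finset.mem_coe.mpr
      (Finset.mem_of_mem_erase (Finset.mem_coe.mp hB))))
      (Finset.ne_of_mem_erase (Finset.mem_coe.mp hB)).symm
  set ap := a.filter (fun A => s/2 < lam A) with hap_def
  set am := a.filter (fun A => lam A < -(s/2)) with ham_def
  set G := (⋃ A ∈ ap, (A : Set ℕ)) ∩ (⋃ B ∈ am, (B : Set ℕ)) with hG_def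
  have hGsub : G ⊆ Hset := by
    rintro n ⟨hn1, hn2⟩
    simp only [Set.mem_iUnion, exists_prop] at hn1 hn2
    obtain ⟨A, hA, hnA⟩ := hn1
    obtain ⟨B, hB, hnB⟩ := hn2
    have hA' := Finset.mem_filter.mp hA
    have hB' := Finset.mem_filter.mp hB
    have hAB : A ≠ B := by rintro rfl; linarith [hA'.2, hB'.2]
    rw [hH_def]
    simp only [Set.mem_iUnion, exists_prop]
    exact ⟨A, Finset.mem_coe.mpr hA'.1,
      B, Finset.mem_coe.mpr (Finset.mem_erase.mpr ⟨hAB.symm, hB'.1⟩), hnA, hnB⟩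
  have hGfin : G.Finite := hHfin.subset hGsub
  have hdisj : ((⋃ A ∈ ap, (A : Set ℕ)) \ G) ∩ ((⋃ B ∈ am, (B : Set ℕ)) \ G) = ∅ := by
    ext n
    simp only [Set.mem_inter_iff, Set.mem_diff, Set.mem_empty_iff_false, iff_false]
    rintro ⟨⟨hn1, hn2⟩, ⟨hn3, hn4⟩⟩
    exact hn2 ⟨hn1, hn3⟩
  have heq1 : eqStar ((⋃ A ∈ ap, (A : Set ℕ)) \ G) (⋃ A ∈ ap, (A : Set ℕ)) := by
    apply hGfin.subset
    rw [Set.symmDiff_def]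
    rintro n (⟨⟨hn1, _⟩, hn3⟩ | ⟨hn1, hn2⟩)
    · exact absurd hn1 hn3
    · by_contra hG
      exact hn2 ⟨hn1, hG⟩
  have heq2 : eqStar ((⋃ B ∈ am, (B : Set ℕ)) \ G) (⋃ B ∈ am, (B : Set ℕ)) := by
    apply hGfin.subset
    rw [Set.symmDiff_def]
    rintro n (⟨⟨hn1, _⟩, hn3⟩ | ⟨hn1, hn2⟩)
    · exact absurd hn1 hn3
    · by_contra hG
      exact hn2 ⟨hn1, hG⟩
  have core : ∀ n : ℕ, N ≤ n → n ∉ Hset →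
      (s < x n → n ∈ (⋃ A ∈ ap, (A : Set ℕ))) ∧
      (x n < -s → n ∈ (⋃ B ∈ am, (B : Set ℕ))) := by
    intro n hnN hnH
    have hgn : |g n| < s/4 := by
      have := hN n hnN
      rwa [Real.dist_eq, sub_zero] at this
    have hxzn : |x n - z n| < s/4 := by
      have h1 := lp.norm_apply_le_norm ENNReal.top_ne_zero (x - z) n
      rw [lp.coeFn_sub, Pi.sub_apply, Real.norm_eq_abs] at h1
      linarith
    set W := a.filter (fun A => n ∈ A) with hW_def
    have hsum : z n = g n + ∑ A ∈ W, lam A := by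
      rw [hzeq, lp.coeFn_add, Pi.add_apply]
      congr 1
      rw [lp.coeFn_sum, Finset.sum_apply, hW_def, Finset.sum_filter]
      apply Finset.sum_congr rfl
      intro A hA
      by_cases hnA : n ∈ A
      · rw [if_pos hnA, lp.coeFn_smul, Pi.smul_apply, smul_eq_mul,
          indicatorLinfty_apply_of_mem hnA, mul_one]
      · rw [if_neg hnA, lp.coeFn_smul, Pi.smul_apply, smul_eq_mul,
          indicatorLinfty_apply_of_notMem hnA, mul_zero]
    have huniq : ∀ A ∈ W, ∀ B ∈ W, A = B := by
      intro A hA B hB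
      by_contra hAB
      apply hnH
      have hA' := Finset.mem_filter.mp hA
      have hB' := Finset.mem_filter.mp hB
      rw [hH_def]
      simp only [Set.mem_iUnion, exists_prop]
      exact ⟨A, Finset.mem_coe.mpr hA'.1,
        B, Finset.mem_coe.mpr (Finset.mem_erase.mpr ⟨fun hc => hAB hc.symm, hB'.1⟩),
        hA'.2, hB'.2⟩
    have habs1 := abs_lt.mp hxzn
    have habs2 := abs_lt.mp hgn
    constructor
    · intro hxn
      have h1 : s/2 < ∑ A ∈ W, lam A := by linarith
      obtain ⟨A, hA⟩ : W.Nonempty := by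
        rcases W.eq_empty_or_nonempty with h | h
        · rw [h, Finset.sum_empty] at h1; linarith
        · exact h
      have hWA : W = {A} := Finset.eq_singleton_iff_unique_mem.mpr
        ⟨hA, fun B hB => huniq B hB A hA⟩
      rw [hWA, Finset.sum_singleton] at h1
      have hA' := Finset.mem_filter.mp hA
      simp only [Set.mem_iUnion, exists_prop]
      exact ⟨A, Finset.mem_filter.mpr ⟨hA'.1, h1⟩, hA'.2⟩
    · intro hxn
      have h1 : ∑ A ∈ W, lam A < -(s/2) := by linarith
      obtain ⟨A, hA⟩ : W.Nonempty := by
        rcases W.eq_empty_or_nonempty with h | h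
        · rw [h, Finset.sum_empty] at h1; linarith
        · exact h
      have hWA : W = {A} := Finset.eq_singleton_iff_unique_mem.mpr
        ⟨hA, fun B hB => huniq B hB A hA⟩
      rw [hWA, Finset.sum_singleton] at h1
      have hA' := Finset.mem_filter.mp hA
      simp only [Set.mem_iUnion, exists_prop]
      exact ⟨A, Finset.mem_filter.mpr ⟨hA'.1, h1⟩, hA'.2⟩
  refine ⟨((⋃ A ∈ ap, (A : Set ℕ)) \ G, (⋃ B ∈ am, (B : Set ℕ)) \ G),
    ⟨hdisj, ap, am, ?_, ?_, heq1, heq2⟩,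
    Finset.range N ∪ hHfin.toFinset, ?_, ?_⟩
  · intro A hA
    exact ha (Finset.mem_coe.mpr (Finset.filter_subset _ _ (Finset.mem_coe.mp hA)))
  · intro A hA
    exact ha (Finset.mem_coe.mpr (Finset.filter_subset _ _ (Finset.mem_coe.mp hA)))
  · intro n hn
    by_cases hnE : n ∈ Finset.range N ∪ hHfin.toFinset
    · exact Or.inr (Finset.mem_coe.mpr hnE)
    · have h1 : N ≤ n := by
        by_contra h
        exact hnE (Finset.mem_union_left _ (Finset.mem_range.mpr (lt_of_not_ge h)))
      have h2 : n ∉ Hset := fun h => hnE (Finset.mem_union_right _ (hHfin.mem_toFinset.mpr h))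
      have h3 := (core n h1 h2).1 hn
      exact Or.inl ⟨h3, fun hG => h2 (hGsub hG)⟩
  · intro n hn
    by_cases hnE : n ∈ Finset.range N ∪ hHfin.toFinset
    · exact Or.inr (Finset.mem_coe.mpr hnE)
    · have h1 : N ≤ n := by
        by_contra h
        exact hnE (Finset.mem_union_left _ (Finset.mem_range.mpr (lt_of_not_ge h)))
      have h2 : n ∉ Hset := fun h => hnE (Finset.mem_union_right _ (hHfin.mem_toFinset.mpr h))
      have h3 := (core n h1 h2).2 hn
      exact Or.inl ⟨h3, fun hG => h2 (hGsub hG)⟩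

end Aux17

set_option maxHeartbeats 1000000 in
/-- if `ℙ_𝒜` is σ-centered and `T : X_𝒜 → Y` is a bounded linear injective
operator with separable range into a Banach space `Y`, then the unit sphere of
`(X_𝒜, ‖·‖_T)` is the union of countably many sets of diameter strictly less than `1`. -/
theorem statement17 (𝒜 : Set (Set ℕ)) (h𝒜 : ADFamily 𝒜) (hσ : SplitSigmaCentered 𝒜)
    (Y : Type) [NormedAddCommGroup Y] [NormedSpace ℝ Y] [CompleteSpace Y]
    (T : XA 𝒜 →L[ℝ] Y) (hinj : Function.Injective fun x => T x)
    (hsep : TopologicalSpace.IsSeparable (Set.range fun x => T x)) :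
    ∃ S : ℕ → Set (XA 𝒜),
      {x : XA 𝒜 | ‖x‖ + ‖T x‖ = 1} = ⋃ n, S n ∧
      ∀ n, ∃ d : ℝ, d < 1 ∧
        ∀ x ∈ S n, ∀ y ∈ S n, ‖x - y‖ + ‖T (x - y)‖ ≤ d := by
  classical
  obtain ⟨P, hPU, hPcent⟩ := hσ
  obtain ⟨c, hc_count, hc_sub⟩ := hsep
  obtain ⟨u, hu⟩ := (hc_count.insert (T 0)).exists_eq_range (Set.insert_nonempty _ _)
  have hu_dense : ∀ (x : XA 𝒜) (ε : ℝ), 0 < ε → ∃ k, ‖T x - u k‖ < ε := by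
    intro x ε hε
    have h1 : T x ∈ closure (Set.range u) := by
      rw [← hu]
      exact closure_mono (Set.subset_insert _ _) (hc_sub ⟨x, rfl⟩)
    rcases Metric.mem_closure_iff.mp h1 ε hε with ⟨b, ⟨k, rfl⟩, hb⟩
    exact ⟨k, by rwa [← dist_eq_norm]⟩
  have hdata : ∀ x : XA 𝒜, ∃ (j k m : ℕ) (p : Set ℕ × Set ℕ) (E : Finset ℕ),
      ‖x‖ + ‖T x‖ = 1 →
      ((2:ℝ)⁻¹ ^ (j+1) < ‖T x‖ ∧
       ‖T x - u k‖ < (2:ℝ)⁻¹ ^ (j+1) / 8 ∧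
       p ∈ P m ∧
       {n : ℕ | (2:ℝ)⁻¹ ^ (j+1) / 8 < (x : Linfty) n} ⊆ p.1 ∪ ↑E ∧
       {n : ℕ | (x : Linfty) n < -((2:ℝ)⁻¹ ^ (j+1) / 8)} ⊆ p.2 ∪ ↑E) := by
    intro x
    by_cases hx : ‖x‖ + ‖T x‖ = 1
    · have hT0 : 0 < ‖T x‖ := by
        rcases lt_or_eq_of_le (norm_nonneg (T x)) with h | h
        · exact h
        · exfalso
          have hTx0 : T x = 0 := norm_eq_zero.mp h.symm
          have hx0 : x = 0 := by
            apply hinj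
            show T x = T 0
            rw [hTx0, map_zero]
          rw [hx0] at hx
          simp at hx
      obtain ⟨j0, hj0⟩ := exists_pow_lt_of_lt_one hT0 (by norm_num : (2:ℝ)⁻¹ < 1)
      have hj : (2:ℝ)⁻¹ ^ (j0+1) < ‖T x‖ := by
        have hle : (2:ℝ)⁻¹ ^ (j0+1) ≤ (2:ℝ)⁻¹ ^ j0 := by
          rw [pow_succ]
          nlinarith [pow_nonneg (by norm_num : (0:ℝ) ≤ 2⁻¹) j0]
        linarith
      have hs : 0 < (2:ℝ)⁻¹ ^ (j0+1) / 8 := by positivity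
      obtain ⟨k, hk⟩ := hu_dense x _ hs
      obtain ⟨p, hp, E, hE1, hE2⟩ := keyStructure 𝒜 h𝒜 (x : Linfty) x.2 hs
      have hpin : p ∈ ⋃ n, P n := by rw [hPU]; exact hp
      obtain ⟨m, hm⟩ := Set.mem_iUnion.mp hpin
      exact ⟨j0, k, m, p, E, fun _ => ⟨hj, hk, hm, hE1, hE2⟩⟩
    · exact ⟨0, 0, 0, (∅, ∅), ∅, fun h => absurd h hx⟩
  choose jf kf mf pf Ef hf using hdata
  obtain ⟨e, he⟩ := exists_surjective_nat (ℕ × ℕ × ℕ × Finset ℕ × List ℤ)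
  refine ⟨fun n => {x : XA 𝒜 | (‖x‖ + ‖T x‖ = 1) ∧
    (jf x, kf x, mf x, Ef x,
      ((Ef x).sort (· ≤ ·)).map fun i =>
        round ((x : Linfty) i / ((2:ℝ)⁻¹ ^ (jf x + 1) / 8))) = e n}, ?_, ?_⟩
  · ext x
    simp only [Set.mem_setOf_eq, Set.mem_iUnion]
    constructor
    · intro hx
      obtain ⟨n, hn⟩ := he (jf x, kf x, mf x, Ef x,
        ((Ef x).sort (· ≤ ·)).map fun i =>
          round ((x : Linfty) i / ((2:ℝ)⁻¹ ^ (jf x + 1) / 8)))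
      exact ⟨n, hx, hn.symm⟩
    · rintro ⟨n, hx, -⟩
      exact hx
  · intro n
    refine ⟨1 - (2:ℝ)⁻¹ ^ ((e n).1 + 1) / 2, by
      have : 0 < (2:ℝ)⁻¹ ^ ((e n).1 + 1) := by positivity
      linarith, ?_⟩
    rintro x ⟨hxS, hxΦ⟩ y ⟨hyS, hyΦ⟩
    have hj1 : (e n).1 = jf x := by rw [← hxΦ]
    rw [hj1]
    have hxy := hxΦ.trans hyΦ.symm
    simp only [Prod.mk.injEq] at hxy
    obtain ⟨hj, hk, hm, hE, hL⟩ := hxy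
    have hfx := hf x hxS
    have hfy := hf y hyS
    rw [← hj, ← hk, ← hm] at hfy
    obtain ⟨hTx, hkx, hmx, hposx, hnegx⟩ := hfx
    obtain ⟨hTy, hky, hmy, hposy, hnegy⟩ := hfy
    have ht0 : 0 < (2:ℝ)⁻¹ ^ (jf x + 1) := by positivity
    have ht1 : (2:ℝ)⁻¹ ^ (jf x + 1) ≤ 1 := pow_le_one₀ (by norm_num) (by norm_num)
    have hnx : ‖x‖ ≤ 1 - (2:ℝ)⁻¹ ^ (jf x + 1) := by linarith
    have hny : ‖y‖ ≤ 1 - (2:ℝ)⁻¹ ^ (jf x + 1) := by linarith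
    have hcompat : ∀ i : ℕ, i ∈ (pf x).1 → i ∈ (pf y).2 → False := by
      intro i hix hiy
      obtain ⟨r, hr, hrext⟩ := hPcent (mf x) {pf x, pf y} (by
        intro q hq
        simp only [Finset.coe_insert, Finset.coe_singleton, Set.mem_insert_iff,
          Set.mem_singleton_iff] at hq
        rcases hq with rfl | rfl
        · exact hmx
        · exact hmy)
      have h1 := (hrext (pf x) (by simp)).1 hix
      have h2 := (hrext (pf y) (by simp)).2 hiy
      have h3 := hr.1
      have : i ∈ r.1 ∩ r.2 := ⟨h1, h2⟩
      rw [h3] at this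
      exact this
    have hcompat' : ∀ i : ℕ, i ∈ (pf y).1 → i ∈ (pf x).2 → False := by
      intro i hiy hix
      obtain ⟨r, hr, hrext⟩ := hPcent (mf x) {pf x, pf y} (by
        intro q hq
        simp only [Finset.coe_insert, Finset.coe_singleton, Set.mem_insert_iff,
          Set.mem_singleton_iff] at hq
        rcases hq with rfl | rfl
        · exact hmx
        · exact hmy)
      have h1 := (hrext (pf y) (by simp)).1 hiy
      have h2 := (hrext (pf x) (by simp)).2 hix
      have h3 := hr.1
      have : i ∈ r.1 ∩ r.2 := ⟨h1, h2⟩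
      rw [h3] at this
      exact this
    have hcoord : ∀ i : ℕ, |(x : Linfty) i - (y : Linfty) i|
        ≤ 1 - (2:ℝ)⁻¹ ^ (jf x + 1) + (2:ℝ)⁻¹ ^ (jf x + 1) / 8 := by
      intro i
      by_cases hiE : i ∈ Ef x
      · rw [← hE] at hL
        rw [List.map_inj_left] at hL
        have hround := hL i ((Finset.mem_sort _).mpr hiE)
        rw [← hj] at hround
        have := round_close (by positivity : (0:ℝ) < (2:ℝ)⁻¹ ^ (jf x + 1) / 8) hround
        linarith
      · have hbx : |(x : Linfty) i| ≤ 1 - (2:ℝ)⁻¹ ^ (jf x + 1) := by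
          have h1 := lp.norm_apply_le_norm ENNReal.top_ne_zero (x : Linfty) i
          rw [Real.norm_eq_abs] at h1
          have h2 : ‖(x : Linfty)‖ = ‖x‖ := rfl
          linarith [h1, hnx, h2.le]
        have hby : |(y : Linfty) i| ≤ 1 - (2:ℝ)⁻¹ ^ (jf x + 1) := by
          have h1 := lp.norm_apply_le_norm ENNReal.top_ne_zero (y : Linfty) i
          rw [Real.norm_eq_abs] at h1
          have h2 : ‖(y : Linfty)‖ = ‖y‖ := rfl
          linarith [h1, hny, h2.le]
        have hnc1 : ¬((2:ℝ)⁻¹ ^ (jf x + 1) / 8 < (x : Linfty) i ∧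
            (y : Linfty) i < -((2:ℝ)⁻¹ ^ (jf x + 1) / 8)) := by
          rintro ⟨hc1, hc2⟩
          have hx1 : i ∈ (pf x).1 := by
            rcases hposx hc1 with h | h
            · exact h
            · exact absurd (Finset.mem_coe.mp h) hiE
          have hy2 : i ∈ (pf y).2 := by
            rcases hnegy hc2 with h | h
            · exact h
            · rw [← hE] at h
              exact absurd (Finset.mem_coe.mp h) hiE
          exact hcompat i hx1 hy2
        have hnc2 : ¬((x : Linfty) i < -((2:ℝ)⁻¹ ^ (jf x + 1) / 8) ∧
            (2:ℝ)⁻¹ ^ (jf x + 1) / 8 < (y : Linfty) i) := by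
          rintro ⟨hc1, hc2⟩
          have hx2 : i ∈ (pf x).2 := by
            rcases hnegx hc1 with h | h
            · exact h
            · exact absurd (Finset.mem_coe.mp h) hiE
          have hy1 : i ∈ (pf y).1 := by
            rcases hposy hc2 with h | h
            · exact h
            · rw [← hE] at h
              exact absurd (Finset.mem_coe.mp h) hiE
          exact hcompat' i hy1 hx2
        have habs := abs_sub_le_max_abs_add
          (le_of_lt (by positivity : (0:ℝ) < (2:ℝ)⁻¹ ^ (jf x + 1) / 8)) hnc1 hnc2
        have hmax : max |(x : Linfty) i| |(y : Linfty) i|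
            ≤ 1 - (2:ℝ)⁻¹ ^ (jf x + 1) := max_le hbx hby
        linarith
    have hnorm : ‖x - y‖ ≤ 1 - (2:ℝ)⁻¹ ^ (jf x + 1) + (2:ℝ)⁻¹ ^ (jf x + 1) / 8 := by
      rw [Submodule.coe_norm, AddSubgroupClass.coe_sub]
      apply lp.norm_le_of_forall_le (by linarith)
      intro i
      rw [lp.coeFn_sub, Pi.sub_apply, Real.norm_eq_abs]
      exact hcoord i
    have hTbound : ‖T (x - y)‖ ≤ (2:ℝ)⁻¹ ^ (jf x + 1) / 4 := by
      rw [map_sub]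
      have h1 := norm_sub_le (T x - u (kf x)) (T y - u (kf x))
      rw [sub_sub_sub_cancel_right] at h1
      linarith
    linarith
end

section
/- Suppose 𝒜 is an a.d.-family such that ℙ_𝒜 satisfies the c.c.c., Y is a Banach space, and T : X_𝒜 → Y is a bounded linear injective operator with separable range. Then the unit sphere of (X_𝒜, ‖·‖_T) does not admit an uncountable 1-separated set. -/
open Set Filter Cardinal

namespace St18

lemma pig {α β : Type*} [Countable β] {S : Set α} (hS : ¬S.Countable) (g : α → β) :
    ∃ b, ¬{x ∈ S | g x = b}.Countable := by
  by_contra h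
  push_neg at h
  apply hS
  have : S = ⋃ b : β, {x ∈ S | g x = b} := by ext x; simp
  rw [this]
  exact Set.countable_iUnion h

lemma pig_dist {α X : Type*} [PseudoMetricSpace X] {S : Set α} (hS : ¬S.Countable)
    (f : α → X) (hsep : TopologicalSpace.IsSeparable (f '' S)) {ε : ℝ} (hε : 0 < ε) :
    ∃ S' ⊆ S, ¬S'.Countable ∧ ∀ x ∈ S', ∀ y ∈ S', dist (f x) (f y) ≤ ε := by
  obtain ⟨Q, hQc, hQd⟩ := hsep
  have hx : ∀ x ∈ S, ∃ q ∈ Q, dist (f x) q < ε / 2 := by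
    intro x hxS
    have h1 : f x ∈ closure Q := hQd ⟨x, hxS, rfl⟩
    exact Metric.mem_closure_iff.mp h1 _ (by linarith)
  have hSne : S.Nonempty := by
    rcases S.eq_empty_or_nonempty with h | h
    · exact absurd (h ▸ Set.countable_empty) hS
    · exact h
  obtain ⟨x₀, hx₀⟩ := hSne
  obtain ⟨q₀, hq₀, _⟩ := hx x₀ hx₀
  haveI : Countable ↥Q := hQc.to_subtype
  classical
  set g : α → ↥Q := fun x =>
    if h : ∃ q ∈ Q, dist (f x) q < ε / 2 then ⟨h.choose, h.choose_spec.1⟩ else ⟨q₀, hq₀⟩ with hg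
  obtain ⟨b, hb⟩ := pig hS g
  refine ⟨{x ∈ S | g x = b}, fun x hx => hx.1, hb, ?_⟩
  have key : ∀ x ∈ {x ∈ S | g x = b}, dist (f x) (b : X) < ε / 2 := by
    rintro x ⟨hxS, hxg⟩
    have h : ∃ q ∈ Q, dist (f x) q < ε / 2 := hx x hxS
    rw [hg] at hxg
    simp only [dif_pos h] at hxg
    have := h.choose_spec.2
    rw [← hxg]
    exact this
  intro x hxm y hym
  calc dist (f x) (f y) ≤ dist (f x) (b : X) + dist (f y) (b : X) := dist_triangle_right _ _ _
    _ ≤ ε := by have := key x hxm; have := key y hym; linarith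

noncomputable def c0Sub : Submodule ℝ Linfty where
  carrier := c0Set
  add_mem' := by
    intro a b ha hb
    have h : Tendsto (fun n => a n + b n) atTop (nhds (0 + 0)) := (ha : Tendsto _ _ _).add hb
    simpa [c0Set, lp.coeFn_add, Pi.add_apply] using h
  zero_mem' := by
    simp only [c0Set, Set.mem_setOf_eq, lp.coeFn_zero, Pi.zero_apply]
    exact tendsto_const_nhds
  smul_mem' := by
    intro r a ha
    have h : Tendsto (fun n => r * a n) atTop (nhds (r * 0)) :=
      ((ha : Tendsto _ _ _).const_mul r)
    simpa [c0Set, lp.coeFn_smul, Pi.smul_apply, smul_eq_mul] using h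

lemma approx (𝒜 : Set (Set ℕ)) (x : Linfty) (hx : x ∈ XA 𝒜) {ε : ℝ} (hε : 0 < ε) :
    ∃ (c : Linfty) (F : Finset (Set ℕ)) (μ : Set ℕ → ℝ),
      (∀ r : ℝ, 0 < r → ∃ m : ℕ, ∀ n ≥ m, |c n| ≤ r) ∧ ↑F ⊆ 𝒜 ∧
      ‖x - (c + ∑ A ∈ F, μ A • indicatorLinfty A)‖ ≤ ε := by
  classical
  have hx' : x ∈ closure (Submodule.span ℝ (c0Set ∪ indicatorLinfty '' 𝒜) : Set Linfty) := by
    have h := (Submodule.span ℝ (c0Set ∪ indicatorLinfty '' 𝒜)).topologicalClosure_coe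
    rw [← h]
    exact hx
  obtain ⟨w, hwmem, hwd⟩ := Metric.mem_closure_iff.mp hx' ε hε
  rw [Submodule.span_union] at hwmem
  rw [SetLike.mem_coe, Submodule.mem_sup] at hwmem
  obtain ⟨c, hc, u, hu, hcu⟩ := hwmem
  have hc0 : c ∈ c0Set := by
    have hle : Submodule.span ℝ c0Set ≤ c0Sub := Submodule.span_le.mpr (fun f hf => hf)
    exact hle hc
  rw [Submodule.mem_span_set'] at hu
  obtain ⟨k, f, g, hsum⟩ := hu
  have hA : ∀ i : Fin k, ∃ A ∈ 𝒜, indicatorLinfty A = (g i : Linfty) := by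
    intro i
    obtain ⟨A, hA1, hA2⟩ := (g i).2
    exact ⟨A, hA1, hA2⟩
  choose A hA𝒜 hAind using hA
  refine ⟨c, Finset.univ.image A, fun B => ∑ i ∈ Finset.univ.filter (fun i => A i = B), f i,
    ?_, ?_, ?_⟩
  · intro r hr
    obtain ⟨N, hN⟩ := Metric.tendsto_atTop.mp hc0 r hr
    exact ⟨N, fun n hn => by
      have h2 := hN n hn
      rw [Real.dist_eq, sub_zero] at h2
      exact h2.le⟩
  · intro B hB
    simp only [Finset.coe_image, Set.mem_image] at hB
    obtain ⟨i, _, rfl⟩ := hB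
    exact hA𝒜 i
  · have hrep : ∑ B ∈ Finset.univ.image A,
        (∑ i ∈ Finset.univ.filter (fun i => A i = B), f i) • indicatorLinfty B = u := by
      rw [← hsum]
      rw [← Finset.sum_fiberwise_of_maps_to
        (fun i _ => Finset.mem_image_of_mem A (Finset.mem_univ i))
        (fun i => f i • (g i : Linfty))]
      refine Finset.sum_congr rfl (fun B _ => ?_)
      rw [Finset.sum_smul]
      refine Finset.sum_congr rfl (fun i hi => ?_)
      rw [Finset.mem_filter] at hi
      rw [← hAind i, hi.2]
    rw [hrep, hcu]
    rw [← dist_eq_norm]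
    exact hwd.le

end St18


set_option maxHeartbeats 4000000 in
/-- if `ℙ_𝒜` satisfies the c.c.c. and `T : X_𝒜 → Y` is a bounded linear
injective operator with separable range into a Banach space `Y`, then the unit sphere of
`(X_𝒜, ‖·‖_T)` has no uncountable `1`-separated set. -/
theorem statement18 (𝒜 : Set (Set ℕ)) (h𝒜 : ADFamily 𝒜) (hccc : SplitCCC 𝒜)
    (Y : Type) [NormedAddCommGroup Y] [NormedSpace ℝ Y] [CompleteSpace Y]
    (T : XA 𝒜 →L[ℝ] Y) (hinj : Function.Injective fun x => T x)
    (hsep : TopologicalSpace.IsSeparable (Set.range fun x => T x)) :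
    ¬∃ S : Set (XA 𝒜), (∀ x ∈ S, ‖x‖ + ‖T x‖ = 1) ∧ ¬S.Countable ∧
        ∀ x ∈ S, ∀ y ∈ S, x ≠ y → 1 ≤ ‖x - y‖ + ‖T (x - y)‖ := by
  classical
  rintro ⟨S, hsph, hSunc, hsepd⟩
  -- Step A : a uniform positive lower bound for ‖T x‖ on an uncountable subset
  have hTpos : ∀ x ∈ S, (0 : ℝ) < ‖T x‖ := by
    intro x hx
    rcases eq_or_ne (T x) 0 with h | h
    · exfalso
      have hx0 : x = 0 := by
        apply hinj
        show T x = T 0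
        rw [h, map_zero]
      have h1 := hsph x hx
      rw [hx0] at h1
      simp at h1
    · exact norm_pos_iff.mpr h
  obtain ⟨gk, hgk⟩ : ∃ gk : ↥(XA 𝒜) → ℕ, gk = fun x =>
      if h : ∃ k : ℕ, 1 / ((k : ℝ) + 1) < ‖T x‖ then Nat.find h else 0 := ⟨_, rfl⟩
  obtain ⟨k₀, hk₀⟩ := St18.pig hSunc gk
  obtain ⟨S₁, hS₁def⟩ : ∃ S₁ : Set ↥(XA 𝒜), S₁ = {x ∈ S | gk x = k₀} := ⟨_, rfl⟩
  rw [← hS₁def] at hk₀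
  have hS₁S : S₁ ⊆ S := by rw [hS₁def]; exact fun x hx => hx.1
  obtain ⟨δ, hδdef⟩ : ∃ δ : ℝ, δ = 1 / ((k₀ : ℝ) + 1) := ⟨_, rfl⟩
  have hδ : 0 < δ := by rw [hδdef]; positivity
  have hδ1 : δ ≤ 1 := by
    rw [hδdef, div_le_one (by positivity)]
    have : (0 : ℝ) ≤ (k₀ : ℝ) := Nat.cast_nonneg k₀
    linarith
  have hS₁T : ∀ x ∈ S₁, δ < ‖T x‖ := by
    intro x hx
    rw [hS₁def] at hx
    obtain ⟨hxS, hxg⟩ := hx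
    have hex : ∃ k : ℕ, 1 / ((k : ℝ) + 1) < ‖T x‖ := by
      obtain ⟨n, hn⟩ := exists_nat_one_div_lt (hTpos x hxS)
      exact ⟨n, hn⟩
    rw [hgk] at hxg
    simp only [dif_pos hex] at hxg
    have h2 := Nat.find_spec hex
    rw [hxg] at h2
    rw [hδdef]
    exact h2
  have hS₁n : ∀ x ∈ S₁, ‖(x : Linfty)‖ ≤ 1 - δ := by
    intro x hx
    have h1 := hsph x (hS₁S hx)
    have h2 := hS₁T x hx
    have h3 : ‖x‖ = ‖(x : Linfty)‖ := rfl
    rw [h3] at h1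
    linarith
  -- Step B : refine so that images under T are δ/8-close
  obtain ⟨S₂, hS₂sub, hS₂unc, hS₂T⟩ := St18.pig_dist hk₀ (fun x => T x)
    (hsep.mono (Set.image_subset_range _ _)) (show (0:ℝ) < δ / 8 by positivity)
  have hS₂d : ∀ x ∈ S₂, ∀ y ∈ S₂, x ≠ y → 1 - δ / 8 ≤ ‖(x : Linfty) - (y : Linfty)‖ := by
    intro x hx y hy hxy
    have h1 := hsepd x (hS₁S (hS₂sub hx)) y (hS₁S (hS₂sub hy)) hxy
    have h2 : ‖T (x - y)‖ ≤ δ / 8 := by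
      rw [map_sub, ← dist_eq_norm]
      exact hS₂T x hx y hy
    have h3 : ‖x - y‖ = ‖(x : Linfty) - (y : Linfty)‖ := rfl
    rw [h3] at h1
    linarith
  -- Step C : choose approximations
  have happrox := fun x : ↥(XA 𝒜) => St18.approx 𝒜 x x.2 (show (0:ℝ) < δ / 100 by positivity)
  choose cf Ff μf hcf hF𝒜 hwnorm0 using happrox
  obtain ⟨wf, hwf⟩ : ∃ wf : ↥(XA 𝒜) → Linfty,
      wf = fun x => cf x + ∑ A ∈ Ff x, μf x A • indicatorLinfty A := ⟨_, rfl⟩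
  have hwnorm : ∀ z : ↥(XA 𝒜), ‖(z : Linfty) - wf z‖ ≤ δ / 100 := by
    intro z
    rw [hwf]
    exact hwnorm0 z
  choose mf hmf using fun x : ↥(XA 𝒜) => hcf x (δ / 100) (by positivity)
  -- the finite "bad" sets
  obtain ⟨Dst, hDst⟩ : ∃ Dst : ↥(XA 𝒜) → Set ℕ,
      Dst = fun x => {n | ∃ A ∈ Ff x, ∃ B ∈ Ff x, A ≠ B ∧ n ∈ A ∧ n ∈ B} := ⟨_, rfl⟩
  have hDmem : ∀ (x : ↥(XA 𝒜)) (n : ℕ),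
      n ∈ Dst x ↔ ∃ A ∈ Ff x, ∃ B ∈ Ff x, A ≠ B ∧ n ∈ A ∧ n ∈ B := by
    intro x n
    rw [hDst]
    exact Iff.rfl
  have hDfin : ∀ x : ↥(XA 𝒜), (Dst x).Finite := by
    intro x
    have hsub : Dst x ⊆
        ⋃ A ∈ (Ff x : Set (Set ℕ)), ⋃ B ∈ (Ff x : Set (Set ℕ)),
          if A ≠ B then A ∩ B else ∅ := by
      intro n hn
      obtain ⟨A, hA, B, hB, hAB, h1, h2⟩ := (hDmem x n).mp hn
      refine Set.mem_biUnion hA ?_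
      refine Set.mem_biUnion hB ?_
      rw [if_pos hAB]
      exact ⟨h1, h2⟩
    refine Set.Finite.subset ?_ hsub
    refine Set.Finite.biUnion (Ff x).finite_toSet (fun A hA => ?_)
    refine Set.Finite.biUnion (Ff x).finite_toSet (fun B hB => ?_)
    split_ifs with h
    · exact h𝒜.2.2 A (hF𝒜 x hA) B (hF𝒜 x hB) h
    · exact Set.finite_empty
  -- Step D : stabilize m and the bad set
  obtain ⟨g₂, hg₂⟩ : ∃ g₂ : ↥(XA 𝒜) → ℕ × Finset ℕ,
      g₂ = fun x => (mf x, (hDfin x).toFinset) := ⟨_, rfl⟩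
  obtain ⟨q, hS₃unc⟩ := St18.pig hS₂unc g₂
  obtain ⟨m₀, D₀⟩ := q
  obtain ⟨S₃, hS₃def⟩ : ∃ S₃ : Set ↥(XA 𝒜), S₃ = {x ∈ S₂ | g₂ x = (m₀, D₀)} := ⟨_, rfl⟩
  rw [← hS₃def] at hS₃unc
  have hS₃sub : S₃ ⊆ S₂ := by rw [hS₃def]; exact fun x hx => hx.1
  have hS₃m : ∀ x ∈ S₃, mf x = m₀ := by
    intro x hx
    rw [hS₃def] at hx
    have h1 := congrArg Prod.fst hx.2
    rw [hg₂] at h1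
    exact h1
  have hS₃D : ∀ x ∈ S₃, Dst x = ↑D₀ := by
    intro x hx
    rw [hS₃def] at hx
    have h1 := congrArg Prod.snd hx.2
    rw [hg₂] at h1
    simp only at h1
    rw [← h1, Set.Finite.coe_toFinset]
  obtain ⟨M, hM⟩ : ∃ M : ℕ, M = m₀ ⊔ (D₀.sup id + 1) := ⟨_, rfl⟩
  have hm₀M : m₀ ≤ M := by rw [hM]; exact le_sup_left
  have hD₀M : ∀ n ∈ D₀, n < M := by
    intro n hn
    have h1 : id n ≤ D₀.sup id := Finset.le_sup hn
    simp only [id_eq] at h1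
    have h2 : D₀.sup id + 1 ≤ M := by rw [hM]; exact le_sup_right
    omega
  -- Step E : refine so the initial segments of the approximations are δ/100-close
  obtain ⟨S₄, hS₄sub, hS₄unc, hS₄net⟩ := St18.pig_dist hS₃unc
    (fun x => (fun i : Fin M => wf x (i : ℕ)))
    (TopologicalSpace.IsSeparable.of_separableSpace _) (show (0:ℝ) < δ / 100 by positivity)
  -- the conditions
  obtain ⟨t, ht⟩ : ∃ t : ℝ, t = δ / 2 := ⟨_, rfl⟩
  have htpos : 0 < t := by rw [ht]; positivity
  obtain ⟨Pos, hPos⟩ : ∃ Pos : ↥(XA 𝒜) → Set ℕ,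
      Pos = fun x => {n | M ≤ n ∧ n ∉ Dst x ∧ ∃ A ∈ Ff x, t ≤ μf x A ∧ n ∈ A} := ⟨_, rfl⟩
  obtain ⟨Neg, hNeg⟩ : ∃ Neg : ↥(XA 𝒜) → Set ℕ,
      Neg = fun x => {n | M ≤ n ∧ n ∉ Dst x ∧ ∃ A ∈ Ff x, μf x A ≤ -t ∧ n ∈ A} := ⟨_, rfl⟩
  have hPmem : ∀ (x : ↥(XA 𝒜)) (n : ℕ),
      n ∈ Pos x ↔ M ≤ n ∧ n ∉ Dst x ∧ ∃ A ∈ Ff x, t ≤ μf x A ∧ n ∈ A := by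
    intro x n; rw [hPos]; exact Iff.rfl
  have hNmem : ∀ (x : ↥(XA 𝒜)) (n : ℕ),
      n ∈ Neg x ↔ M ≤ n ∧ n ∉ Dst x ∧ ∃ A ∈ Ff x, μf x A ≤ -t ∧ n ∈ A := by
    intro x n; rw [hNeg]; exact Iff.rfl
  have hdisj : ∀ x : ↥(XA 𝒜), Pos x ∩ Neg x = ∅ := by
    intro x
    rw [Set.eq_empty_iff_forall_notMem]
    rintro n ⟨hp, hq⟩
    obtain ⟨hM1, hD1, A, hA, htA, hnA⟩ := (hPmem x n).mp hp
    obtain ⟨-, -, B, hB, htB, hnB⟩ := (hNmem x n).mp hq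
    have hAB : A = B := by
      by_contra hne
      exact hD1 ((hDmem x n).mpr ⟨A, hA, B, hB, hne, hnA, hnB⟩)
    rw [hAB] at htA
    linarith
  -- each pair is a condition of the splitting order
  have hcond : ∀ x : ↥(XA 𝒜), SplitCond 𝒜 (Pos x, Neg x) := by
    intro x
    refine ⟨hdisj x, (Ff x).filter (fun A => t ≤ μf x A),
      (Ff x).filter (fun A => μf x A ≤ -t), ?_, ?_, ?_, ?_⟩
    · exact fun A hA => hF𝒜 x (Finset.filter_subset _ _ hA)
    · exact fun A hA => hF𝒜 x (Finset.filter_subset _ _ hA)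
    · have hsub : symmDiff (Pos x) (⋃ A ∈ (Ff x).filter (fun A => t ≤ μf x A), A) ⊆
          Set.Iio M ∪ Dst x := by
        intro n hn
        rw [Set.mem_symmDiff] at hn
        rcases hn with ⟨h1, h2⟩ | ⟨h1, h2⟩
        · exfalso
          obtain ⟨hM1, hD1, A, hA, htA, hnA⟩ := (hPmem x n).mp h1
          exact h2 (Set.mem_biUnion (Finset.mem_coe.mpr (Finset.mem_filter.mpr ⟨hA, htA⟩)) hnA)
        · rw [Set.mem_iUnion₂] at h1
          obtain ⟨A, hA, hnA⟩ := h1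
          rw [Finset.mem_filter] at hA
          by_cases hM1 : M ≤ n
          · by_cases hD1 : n ∈ Dst x
            · exact Or.inr hD1
            · exact absurd ((hPmem x n).mpr ⟨hM1, hD1, A, hA.1, hA.2, hnA⟩) h2
          · exact Or.inl (Set.mem_Iio.mpr (by omega))
      exact Set.Finite.subset ((Set.finite_Iio M).union (hDfin x)) hsub
    · have hsub : symmDiff (Neg x) (⋃ A ∈ (Ff x).filter (fun A => μf x A ≤ -t), A) ⊆
          Set.Iio M ∪ Dst x := by
        intro n hn
        rw [Set.mem_symmDiff] at hn
        rcases hn with ⟨h1, h2⟩ | ⟨h1, h2⟩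
        · exfalso
          obtain ⟨hM1, hD1, A, hA, htA, hnA⟩ := (hNmem x n).mp h1
          exact h2 (Set.mem_biUnion (Finset.mem_coe.mpr (Finset.mem_filter.mpr ⟨hA, htA⟩)) hnA)
        · rw [Set.mem_iUnion₂] at h1
          obtain ⟨A, hA, hnA⟩ := h1
          rw [Finset.mem_filter] at hA
          by_cases hM1 : M ≤ n
          · by_cases hD1 : n ∈ Dst x
            · exact Or.inr hD1
            · exact absurd ((hNmem x n).mpr ⟨hM1, hD1, A, hA.1, hA.2, hnA⟩) h2
          · exact Or.inl (Set.mem_Iio.mpr (by omega))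
      exact Set.Finite.subset ((Set.finite_Iio M).union (hDfin x)) hsub
  -- pointwise value of the approximation
  have hval : ∀ (x : ↥(XA 𝒜)) (n : ℕ),
      wf x n = cf x n + ∑ A ∈ Ff x, μf x A * (if n ∈ A then 1 else 0) := by
    intro x n
    rw [hwf]
    simp only [lp.coeFn_add, Pi.add_apply]
    congr 1
    rw [lp.coeFn_sum, Finset.sum_apply]
    refine Finset.sum_congr rfl (fun A _ => ?_)
    rw [lp.coeFn_smul, Pi.smul_apply, smul_eq_mul]
    by_cases h : n ∈ A <;> simp [indicatorLinfty, h]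
  -- coordinates of elements are close to those of their approximations
  have hxw : ∀ (z : ↥(XA 𝒜)) (k : ℕ), |(z : Linfty) k - wf z k| ≤ δ / 100 := by
    intro z k
    have h1 := lp.norm_apply_le_norm ENNReal.top_ne_zero ((z : Linfty) - wf z) k
    rw [lp.coeFn_sub, Pi.sub_apply, Real.norm_eq_abs] at h1
    exact h1.trans (hwnorm z)
  -- the key witness lemma
  have hwitness : ∀ x ∈ S₄, ∀ y ∈ S₄, x ≠ y →
      ∃ n, (n ∈ Pos x ∧ n ∈ Neg y) ∨ (n ∈ Pos y ∧ n ∈ Neg x) := by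
    intro x hx y hy hxy
    have hxS₃ : x ∈ S₃ := hS₄sub hx
    have hyS₃ : y ∈ S₃ := hS₄sub hy
    have hxS₂ : x ∈ S₂ := hS₃sub hxS₃
    have hyS₂ : y ∈ S₂ := hS₃sub hyS₃
    have hlow := hS₂d x hxS₂ y hyS₂ hxy
    have hlt : 1 - δ / 8 - δ / 100 < ‖(x : Linfty) - (y : Linfty)‖ := by linarith
    rw [lp.norm_eq_ciSup] at hlt
    obtain ⟨n, hn⟩ := exists_lt_of_lt_ciSup hlt
    rw [lp.coeFn_sub, Pi.sub_apply, Real.norm_eq_abs] at hn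
    -- the approximations differ strongly at n
    have hwd : 1 - δ / 8 - 3 * (δ / 100) < |wf x n - wf y n| := by
      have h1 := hxw x n
      have h2 := hxw y n
      have h5 := abs_sub_abs_le_abs_sub ((x : Linfty) n - (y : Linfty) n)
        (((x : Linfty) n - wf x n) - ((y : Linfty) n - wf y n))
      have h3 : (x : Linfty) n - (y : Linfty) n -
          (((x : Linfty) n - wf x n) - ((y : Linfty) n - wf y n)) = wf x n - wf y n := by ring
      rw [h3] at h5
      have h4 : |((x : Linfty) n - wf x n) - ((y : Linfty) n - wf y n)| ≤ 2 * (δ / 100) :=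
        (abs_sub _ _).trans (by linarith)
      linarith
    -- n lies beyond M
    have hnM : M ≤ n := by
      by_contra hcon
      push_neg at hcon
      have h1 := hS₄net x hx y hy
      have h2 := dist_le_pi_dist (fun i : Fin M => wf x (i : ℕ))
        (fun i : Fin M => wf y (i : ℕ)) ⟨n, hcon⟩
      rw [Real.dist_eq] at h2
      have h3 : |wf x n - wf y n| ≤ δ / 100 := by
        have h6 := h2.trans h1
        simpa using h6
      linarith
    -- pass to the tail values
    have hcx : |cf x n| ≤ δ / 100 :=
      hmf x n (by rw [hS₃m x hxS₃]; exact le_trans hm₀M hnM)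
    have hcy : |cf y n| ≤ δ / 100 :=
      hmf y n (by rw [hS₃m y hyS₃]; exact le_trans hm₀M hnM)
    have hvd : 1 - δ / 8 - 5 * (δ / 100) < |(wf x n - cf x n) - (wf y n - cf y n)| := by
      have h5 := abs_sub_abs_le_abs_sub (wf x n - wf y n) (cf x n - cf y n)
      have h3 : wf x n - wf y n - (cf x n - cf y n)
          = (wf x n - cf x n) - (wf y n - cf y n) := by ring
      rw [h3] at h5
      have h4 : |cf x n - cf y n| ≤ 2 * (δ / 100) := (abs_sub _ _).trans (by linarith)
      linarith
    -- bounds on the tail values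
    have hvb : ∀ z : ↥(XA 𝒜), z ∈ S₃ → |wf z n - cf z n| ≤ 1 - δ + 3 * (δ / 100) := by
      intro z hz
      have hz1 : z ∈ S₁ := hS₂sub (hS₃sub hz)
      have h1 : |wf z n| ≤ ‖wf z‖ := by
        have h0 := lp.norm_apply_le_norm ENNReal.top_ne_zero (wf z) n
        rwa [Real.norm_eq_abs] at h0
      have h2 : ‖wf z‖ ≤ ‖(z : Linfty)‖ + δ / 100 := by
        have h3 := norm_sub_norm_le (wf z) (z : Linfty)
        have h4 : ‖wf z - (z : Linfty)‖ = ‖(z : Linfty) - wf z‖ := norm_sub_rev _ _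
        have h5 := hwnorm z
        rw [h4] at h3
        linarith
      have h6 := hS₁n z hz1
      have h7 : |cf z n| ≤ δ / 100 := hmf z n (by rw [hS₃m z hz]; exact le_trans hm₀M hnM)
      calc |wf z n - cf z n| ≤ |wf z n| + |cf z n| := abs_sub _ _
        _ ≤ 1 - δ + 3 * (δ / 100) := by linarith
    -- a large tail value pins down a member of the family
    have hmem : ∀ z : ↥(XA 𝒜), z ∈ S₃ → wf z n - cf z n ≠ 0 →
        ∃ A ∈ Ff z, μf z A = wf z n - cf z n ∧ n ∈ A := by
      intro z hz hne
      have hnD : n ∉ Dst z := by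
        rw [hS₃D z hz]
        intro hmem'
        exact absurd (hD₀M n hmem') (by omega)
      have hsum : ∑ A ∈ Ff z, μf z A * (if n ∈ A then 1 else 0) = wf z n - cf z n := by
        rw [hval z n]; ring
      have hex : ∃ A ∈ Ff z, n ∈ A := by
        by_contra hcon
        push_neg at hcon
        have h0 : ∑ A ∈ Ff z, μf z A * (if n ∈ A then 1 else 0) = 0 :=
          Finset.sum_eq_zero (fun A hA => by rw [if_neg (hcon A hA), mul_zero])
        rw [h0] at hsum
        exact hne hsum.symm
      obtain ⟨A, hAF, hnA⟩ := hex
      have huniq : ∀ B ∈ Ff z, n ∈ B → B = A := by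
        intro B hB hnB
        by_contra hneq
        exact hnD ((hDmem z n).mpr ⟨B, hB, A, hAF, hneq, hnB, hnA⟩)
      have h0 : ∑ B ∈ Ff z, μf z B * (if n ∈ B then 1 else 0) = μf z A := by
        rw [Finset.sum_eq_single A]
        · rw [if_pos hnA, mul_one]
        · intro B hB hneq
          rw [if_neg (fun hnB => hneq (huniq B hB hnB)), mul_zero]
        · intro h
          exact absurd hAF h
      exact ⟨A, hAF, by rw [← h0, hsum], hnA⟩
    have hnD' : ∀ z : ↥(XA 𝒜), z ∈ S₃ → n ∉ Dst z := by
      intro z hz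
      rw [hS₃D z hz]
      intro hmem'
      exact absurd (hD₀M n hmem') (by omega)
    -- conclude, by cases on the order of the two tail values
    have hbx := abs_le.mp (hvb x hxS₃)
    have hby := abs_le.mp (hvb y hyS₃)
    rcases le_total (wf x n - cf x n) (wf y n - cf y n) with hle | hle
    · -- the y-value is large positive, the x-value is large negative
      rw [abs_sub_comm, abs_of_nonneg (sub_nonneg.mpr hle)] at hvd
      have hvyt : t ≤ wf y n - cf y n := by rw [ht]; linarith [hbx.1]
      have hvxt : wf x n - cf x n ≤ -t := by rw [ht]; linarith [hby.2]
      obtain ⟨A, hAF, hAv, hnA⟩ := hmem y hyS₃ (by intro h0; rw [h0] at hvyt; linarith)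
      obtain ⟨B, hBF, hBv, hnB⟩ := hmem x hxS₃ (by intro h0; rw [h0] at hvxt; linarith)
      refine ⟨n, Or.inr ⟨(hPmem y n).mpr ⟨hnM, hnD' y hyS₃, A, hAF, ?_, hnA⟩,
        (hNmem x n).mpr ⟨hnM, hnD' x hxS₃, B, hBF, ?_, hnB⟩⟩⟩
      · rw [hAv]; exact hvyt
      · rw [hBv]; exact hvxt
    · -- the x-value is large positive, the y-value is large negative
      rw [abs_of_nonneg (sub_nonneg.mpr hle)] at hvd
      have hvxt : t ≤ wf x n - cf x n := by rw [ht]; linarith [hby.1]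
      have hvyt : wf y n - cf y n ≤ -t := by rw [ht]; linarith [hbx.2]
      obtain ⟨A, hAF, hAv, hnA⟩ := hmem x hxS₃ (by intro h0; rw [h0] at hvxt; linarith)
      obtain ⟨B, hBF, hBv, hnB⟩ := hmem y hyS₃ (by intro h0; rw [h0] at hvyt; linarith)
      refine ⟨n, Or.inl ⟨(hPmem x n).mpr ⟨hnM, hnD' x hxS₃, A, hAF, ?_, hnA⟩,
        (hNmem y n).mpr ⟨hnM, hnD' y hyS₃, B, hBF, ?_, hnB⟩⟩⟩
      · rw [hAv]; exact hvxt
      · rw [hBv]; exact hvyt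
  -- Step F : build an uncountable antichain and contradict the c.c.c.
  have hincomp : ∀ x ∈ S₄, ∀ y ∈ S₄, x ≠ y →
      ¬Compat 𝒜 (Pos x, Neg x) (Pos y, Neg y) := by
    intro x hx y hy hxy
    rintro ⟨r, hrcond, ⟨hr1, hr2⟩, ⟨hr3, hr4⟩⟩
    obtain ⟨n, hcase⟩ := hwitness x hx y hy hxy
    rcases hcase with ⟨h1, h2⟩ | ⟨h1, h2⟩
    · have hmem' : n ∈ r.1 ∩ r.2 := ⟨hr1 h1, hr4 h2⟩
      rw [hrcond.1] at hmem'
      exact hmem'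
    · have hmem' : n ∈ r.1 ∩ r.2 := ⟨hr3 h1, hr2 h2⟩
      rw [hrcond.1] at hmem'
      exact hmem'
  have hPanti : SplitAntichain 𝒜 ((fun x => (Pos x, Neg x)) '' S₄) := by
    constructor
    · rintro p ⟨x, hx, rfl⟩
      exact hcond x
    · rintro p ⟨x, hx, rfl⟩ q ⟨y, hy, rfl⟩ hpq
      have hxy : x ≠ y := by
        rintro rfl
        exact hpq rfl
      exact hincomp x hx y hy hxy
  have hPc := hccc _ hPanti
  apply hS₄unc
  refine Set.countable_of_injective_of_countable_image ?_ hPc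
  intro x hx y hy hEq
  by_contra hxy
  obtain ⟨n, hcase⟩ := hwitness x hx y hy hxy
  have hPeq : Pos x = Pos y := congrArg Prod.fst hEq
  have hNeq : Neg x = Neg y := congrArg Prod.snd hEq
  rcases hcase with ⟨h1, h2⟩ | ⟨h1, h2⟩
  · have h1' : n ∈ Pos y := by rw [← hPeq]; exact h1
    have hmem' : n ∈ Pos y ∩ Neg y := ⟨h1', h2⟩
    rw [hdisj y] at hmem'
    exact hmem'
  · have h2' : n ∈ Neg y := by rw [← hNeq]; exact h2
    have hmem' : n ∈ Pos y ∩ Neg y := ⟨h1, h2'⟩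
    rw [hdisj y] at hmem'
    exact hmem'
end
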